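/- For a standard normal random variable X, the central conditional variance Var[X | x < X < -x] = 1 + 2xφ(x)/(1 - 2Φ(x)) is strictly decreasing as a function of x on (-∞, 0). -/

import Mathlib

open MeasureTheory Real

/-- Standard normal density. -/
noncomputable def stdPdf (x : ℝ) : ℝ := (Real.sqrt (2 * Real.pi))⁻¹ * Real.exp (-x ^ 2 / 2)

/-- Standard normal distribution function. -/
noncomputable def stdCdf (x : ℝ) : ℝ := ∫ t in Set.Iic x, stdPdf t

/-!
Write `f(x) = 1 + g(x)/h(x)` with `g(x) = 2xφ(x)` and `h(x) = 1 - 2Φ(x) > 0` on `x < 0`.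
Since `φ' = -xφ`, we get `g' = 2(1 - x²)φ` and `h' = -2φ`, so
`f' = 2φ · u / h²` with `u(x) = (1 - x²)h(x) + 2xφ(x)`.
The `φ`-terms cancel in `u' = -2xh`, which is positive on `x < 0`; as `u(0) = 0`,
`u < 0` on `(-∞, 0)`, hence `f' < 0` there.
-/

theorem hasDerivAt_integral_Iic {f : ℝ → ℝ} (hf : Continuous f) (hfi : Integrable f) (x : ℝ) :
    HasDerivAt (fun y => ∫ t in Set.Iic y, f t) (f x) x := by
  have hsplit : (fun y => ∫ t in Set.Iic y, f t) =
      fun y => (∫ t in Set.Iic 0, f t) + ∫ t in (0 : ℝ)..y, f t := by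
    funext y
    rw [← intervalIntegral.integral_Iic_sub_Iic hfi.integrableOn hfi.integrableOn]
    ring
  rw [hsplit]
  exact (intervalIntegral.integral_hasDerivAt_right (hf.intervalIntegrable 0 x)
    hf.stronglyMeasurable.stronglyMeasurableAtFilter hf.continuousAt).const_add _

theorem integral_Iic_zero_of_even {f : ℝ → ℝ} (hfi : Integrable f) (heven : ∀ x, f (-x) = f x) :
    ∫ t in Set.Iic 0, f t = (∫ t, f t) / 2 := by
  have hsym : ∫ t in Set.Iic 0, f t = ∫ t in Set.Ioi 0, f t := by
    have hflip : ∫ t in Set.Iic 0, f t = ∫ t in Set.Iic 0, f (-t) := by simp only [heven]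
    rw [hflip, integral_comp_neg_Iic, neg_zero]
  have htotal := intervalIntegral.integral_Iic_add_Ioi hfi.integrableOn hfi.integrableOn (b := 0)
  linarith

theorem stdPdf_eq_gaussianPDFReal : stdPdf = ProbabilityTheory.gaussianPDFReal 0 1 := by
  funext x
  simp [stdPdf, ProbabilityTheory.gaussianPDFReal, neg_div]

theorem stdPdf_pos (x : ℝ) : 0 < stdPdf x := by
  rw [stdPdf_eq_gaussianPDFReal]
  exact ProbabilityTheory.gaussianPDFReal_pos 0 1 x one_ne_zero

theorem stdPdf_neg (x : ℝ) : stdPdf (-x) = stdPdf x := by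
  simp [stdPdf]

theorem continuous_stdPdf : Continuous stdPdf := by
  unfold stdPdf
  fun_prop

theorem integrable_stdPdf : Integrable stdPdf := by
  rw [stdPdf_eq_gaussianPDFReal]
  exact ProbabilityTheory.integrable_gaussianPDFReal 0 1

theorem integral_stdPdf : ∫ x, stdPdf x = 1 := by
  rw [stdPdf_eq_gaussianPDFReal]
  exact ProbabilityTheory.integral_gaussianPDFReal_eq_one 0 one_ne_zero

theorem hasDerivAt_stdPdf (x : ℝ) : HasDerivAt stdPdf (-x * stdPdf x) x := by
  have hexponent : HasDerivAt (fun y : ℝ => -y ^ 2 / 2) (-x) x :=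
    ((hasDerivAt_pow 2 x).neg.div_const 2).congr_deriv (by ring)
  exact (((Real.hasDerivAt_exp _).comp x hexponent).const_mul _).congr_deriv
    (by simp only [stdPdf]; ring)

theorem hasDerivAt_stdCdf (x : ℝ) : HasDerivAt stdCdf (stdPdf x) x :=
  hasDerivAt_integral_Iic continuous_stdPdf integrable_stdPdf x

theorem stdCdf_zero : stdCdf 0 = 1 / 2 := by
  rw [stdCdf, integral_Iic_zero_of_even integrable_stdPdf stdPdf_neg, integral_stdPdf]

theorem strictMono_stdCdf : StrictMono stdCdf :=
  strictMono_of_hasDerivAt_pos hasDerivAt_stdCdf stdPdf_pos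

theorem one_sub_two_mul_stdCdf_pos {x : ℝ} (hx : x < 0) : 0 < 1 - 2 * stdCdf x := by
  have := strictMono_stdCdf hx
  rw [stdCdf_zero] at this
  linarith

theorem hasDerivAt_two_mul_self_mul_stdPdf (x : ℝ) :
    HasDerivAt (fun y => 2 * y * stdPdf y) (2 * (1 - x ^ 2) * stdPdf x) x :=
  (((hasDerivAt_id' x).const_mul 2).mul (hasDerivAt_stdPdf x)).congr_deriv (by ring)

theorem hasDerivAt_one_sub_two_mul_stdCdf (x : ℝ) :
    HasDerivAt (fun y => 1 - 2 * stdCdf y) (-(2 * stdPdf x)) x :=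
  ((hasDerivAt_stdCdf x).const_mul 2).const_sub 1

theorem one_sub_sq_mul_add_two_mul_stdPdf_neg {x : ℝ} (hx : x < 0) :
    (1 - x ^ 2) * (1 - 2 * stdCdf x) + 2 * x * stdPdf x < 0 := by
  set u : ℝ → ℝ := fun y => (1 - y ^ 2) * (1 - 2 * stdCdf y) + 2 * y * stdPdf y
  have hu' : ∀ y, HasDerivAt u (-2 * y * (1 - 2 * stdCdf y)) y := fun y =>
    ((((hasDerivAt_pow 2 y).const_sub 1).mul (hasDerivAt_one_sub_two_mul_stdCdf y)).add
      (hasDerivAt_two_mul_self_mul_stdPdf y)).congr_deriv (by ring)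
  have hmono : StrictMonoOn u (Set.Iic 0) := by
    refine strictMonoOn_of_deriv_pos (convex_Iic 0)
      (fun y _ => (hu' y).continuousAt.continuousWithinAt) fun y hy => ?_
    rw [interior_Iic] at hy
    rw [(hu' y).deriv]
    have := one_sub_two_mul_stdCdf_pos hy
    have : 0 < -2 * y := by linarith [Set.mem_Iio.1 hy]
    positivity
  have hu0 : u 0 = 0 := by simp [u, stdCdf_zero]
  simpa [hu0] using hmono hx.le (Set.mem_Iic.2 le_rfl) hx

theorem hasDerivAt_centralCondVar {x : ℝ} (hx : 1 - 2 * stdCdf x ≠ 0) :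
    HasDerivAt (fun y => 1 + 2 * y * stdPdf y / (1 - 2 * stdCdf y))
      (2 * stdPdf x * ((1 - x ^ 2) * (1 - 2 * stdCdf x) + 2 * x * stdPdf x)
        / (1 - 2 * stdCdf x) ^ 2) x :=
  (((hasDerivAt_two_mul_self_mul_stdPdf x).div (hasDerivAt_one_sub_two_mul_stdCdf x) hx).const_add
    1).congr_deriv (by field_simp; ring)

/-- The central conditional variance `Var[X | x < X < -x] = 1 + 2xφ(x)/(1 - 2Φ(x))` of a
standard normal is strictly decreasing on `(-∞, 0)`. -/
theorem stmt_4 :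
    StrictAntiOn
      (fun x : ℝ => 1 + 2 * x * stdPdf x / (1 - 2 * stdCdf x))
      (Set.Iio 0) := by
  have hderiv : ∀ x ∈ Set.Iio (0 : ℝ), HasDerivAt _ _ x := fun x hx =>
    hasDerivAt_centralCondVar (one_sub_two_mul_stdCdf_pos hx).ne'
  refine strictAntiOn_of_deriv_neg (convex_Iio 0)
    (fun x hx => (hderiv x hx).continuousAt.continuousWithinAt) fun x hx => ?_
  rw [interior_Iio] at hx
  rw [(hderiv x hx).deriv]
  have hφ := stdPdf_pos x
  exact div_neg_of_neg_of_pos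
    (mul_neg_of_pos_of_neg (by positivity) (one_sub_sq_mul_add_two_mul_stdPdf_neg hx))
    (pow_pos (one_sub_two_mul_stdCdf_pos hx) 2)
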